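/- Let I ⊂ S be a homogeneous ideal, R = S/I of Krull dimension d, and Θ = θ_1, …, θ_d a linear system of parameters of R. If dim_K A_k(Θ;R)_j = 0 for all k = 0, 1, …, d−1 and all j ≤ r−1, then (i) h_j(R) = dim_K (R/ΘR)_j for all j ≤ r, and (ii) h_{r+1}(R) = dim_K (R/ΘR)_{r+1} − Σ_{k=0}^{d−1} dim_K A_k(Θ;R)_r. -/

import Mathlib

/-! Algebraic core: graded pieces of polynomial rings and their quotients, Koszul
homology (with its internal grading), graded Betti numbers, regularity, depth,
Cohen–Macaulayness, and h-vectors of standard graded algebras. -/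

namespace SerrePaper

open scoped Classical
open MvPolynomial

variable (K : Type) [Field K]

/-- The degree-`j` piece of the standard graded polynomial ring `K[x_v : v ∈ σ]`. -/
noncomputable def polyDeg (σ : Type) (j : ℤ) : Submodule K (MvPolynomial σ K) :=
  if 0 ≤ j then MvPolynomial.homogeneousSubmodule σ K j.toNat else ⊥

/-- A homogeneous ideal of the polynomial ring. -/
def IsHomogIdeal {σ : Type} (I : Ideal (MvPolynomial σ K)) : Prop :=
  ∀ p ∈ I, ∀ c : ℕ, MvPolynomial.homogeneousComponent c p ∈ I

/-- The degree-`j` piece of a quotient `S/I` of the polynomial ring `S`. -/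
noncomputable def quotDeg {σ : Type} (I : Ideal (MvPolynomial σ K)) (j : ℤ) :
    Submodule K (MvPolynomial σ K ⧸ I) :=
  Submodule.map (Ideal.Quotient.mkₐ K I).toLinearMap (polyDeg K σ j)

/-- The Hilbert function `q ↦ dim_K (S/I)_q` of `S/I`. -/
noncomputable def hilbQ {σ : Type} (I : Ideal (MvPolynomial σ K)) (q : ℕ) : ℕ :=
  Module.finrank K (quotDeg K I q)

/-- The `h`-vector of `R = S/I` (of Krull dimension `d`):  `h_k(R)` is the coefficient
of `λ^k` in `F(R,λ)·(1-λ)^d`, where `F(R,λ)` is the Hilbert series; this is the vector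
`(h_0, …, h_s)` with `F(R,λ) = (h_0 + h_1 λ + ⋯ + h_s λ^s)/(1-λ)^d` (and `h_k = 0` for
`k > s`). -/
noncomputable def hQ {σ : Type} (I : Ideal (MvPolynomial σ K)) (d : ℕ) (k : ℕ) : ℤ :=
  ∑ j ∈ Finset.range (k + 1), (-1) ^ j * (d.choose j : ℤ) * (hilbQ K I (k - j) : ℤ)

section Koszul

variable {σ : Type} {τ : Type} [Fintype τ] [LinearOrder τ]
variable {M : Type} [AddCommGroup M] [Module (MvPolynomial σ K) M]

/-- The total Koszul chain space of `M` with respect to a sequence indexed by `τ`: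
functions from subsets of `τ` to `M`; the homological degree-`i` part consists of the
functions supported on subsets of cardinality `i`. -/
abbrev KCh (τ : Type) (M : Type) : Type := Finset τ → M

/-- The Koszul differential with respect to the sequence `y`. -/
noncomputable def kosd (y : τ → MvPolynomial σ K) :
    KCh τ M →ₗ[MvPolynomial σ K] KCh τ M where
  toFun f t := ∑ v : τ, if v ∈ t then 0 else
      ((-1 : ℤ) ^ (t.filter (fun u => u < v)).card) • (y v • f (insert v t))
  map_add' f g := by
    funext t
    simp only [Pi.add_apply]
    rw [← Finset.sum_add_distrib]
    refine Finset.sum_congr rfl fun v _ => ?_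
    by_cases h : v ∈ t
    · simp [h]
    · simp only [if_neg h, Pi.add_apply, smul_add]
  map_smul' r f := by
    funext t
    simp only [Pi.smul_apply, RingHom.id_apply]
    rw [Finset.smul_sum]
    refine Finset.sum_congr rfl fun v _ => ?_
    by_cases h : v ∈ t
    · simp [h]
    · simp only [if_neg h, Pi.smul_apply]
      rw [smul_comm (y v) r (f (insert v t)), smul_comm]

/-- The homological degree-`i` part of the Koszul chain space. -/
def suppOn (i : ℕ) : Submodule (MvPolynomial σ K) (KCh τ M) where
  carrier := {f | ∀ t : Finset τ, t.card ≠ i → f t = 0}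
  add_mem' := by
    intro a b ha hb t ht
    rw [Pi.add_apply, ha t ht, hb t ht, add_zero]
  zero_mem' := fun t _ => rfl
  smul_mem' := by
    intro r f hf t ht
    rw [Pi.smul_apply, hf t ht, smul_zero]

/-- Koszul cycles in homological degree `i`. -/
noncomputable def zFull (y : τ → MvPolynomial σ K) (i : ℕ) :
    Submodule (MvPolynomial σ K) (KCh τ M) :=
  suppOn K i ⊓ LinearMap.ker (kosd K y)

/-- Koszul boundaries in homological degree `i`. -/
noncomputable def bFull (y : τ → MvPolynomial σ K) (i : ℕ) :
    Submodule (MvPolynomial σ K) (KCh τ M) :=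
  Submodule.map (kosd K y) (suppOn K (i + 1))

/-- The `i`-th Koszul homology `H_i(y; M)` of `M` with respect to `y`, as a module
over the polynomial ring. -/
abbrev KosHomology (y : τ → MvPolynomial σ K) (i : ℕ) : Type :=
  ↥(zFull K (M := M) y i) ⧸
    Submodule.comap (zFull K (M := M) y i).subtype (bFull K (M := M) y i)

/-- `H_i(y;M) = 0`. -/
def kosHomologyZero (y : τ → MvPolynomial σ K) (i : ℕ) : Prop :=
  zFull K (M := M) y i ≤ bFull K (M := M) y i

variable [Module K M] [IsScalarTower K (MvPolynomial σ K) M]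

/-- The internal degree-`j`, homological degree-`i` part of the Koszul chain space of a
graded module with grading `ℳ` (a basis element `e_t`, `|t| = i`, has degree `i`). -/
def kosDeg (ℳ : ℤ → Submodule K M) (i : ℕ) (j : ℤ) : Submodule K (KCh τ M) where
  carrier := {f | ∀ t : Finset τ,
      (t.card = i → f t ∈ ℳ (j - i)) ∧ (t.card ≠ i → f t = 0)}
  add_mem' := by
    intro a b ha hb t
    refine ⟨fun ht => ?_, fun ht => ?_⟩
    · exact Submodule.add_mem _ ((ha t).1 ht) ((hb t).1 ht)
    · rw [Pi.add_apply, (ha t).2 ht, (hb t).2 ht, add_zero]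
  zero_mem' := fun t => ⟨fun _ => Submodule.zero_mem _, fun _ => rfl⟩
  smul_mem' := by
    intro c f hf t
    refine ⟨fun ht => Submodule.smul_mem _ c ((hf t).1 ht), fun ht => ?_⟩
    rw [Pi.smul_apply, (hf t).2 ht, smul_zero]

/-- Degree-`j` cycles of homological degree `i`. -/
noncomputable def zDeg (y : τ → MvPolynomial σ K) (ℳ : ℤ → Submodule K M)
    (i : ℕ) (j : ℤ) : Submodule K (KCh τ M) :=
  kosDeg K ℳ i j ⊓ (LinearMap.ker (kosd K y)).restrictScalars K

/-- Vanishing of the degree-`j` part of `H_i(y;M)`: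
every degree-`j` cycle is a boundary. -/
def kosPieceZero (y : τ → MvPolynomial σ K) (ℳ : ℤ → Submodule K M)
    (i : ℕ) (j : ℤ) : Prop :=
  zDeg K y ℳ i j ≤ (bFull K (M := M) y i).restrictScalars K

/-- `dim_K H_i(y;M)_j`, the dimension of the degree-`j` part of `H_i(y;M)`. -/
noncomputable def kosHdim (y : τ → MvPolynomial σ K) (ℳ : ℤ → Submodule K M)
    (i : ℕ) (j : ℤ) : ℕ :=
  Module.finrank K
    (↥(zDeg K y ℳ i j) ⧸
      Submodule.comap (zDeg K y ℳ i j).subtype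
        ((bFull K (M := M) y i).restrictScalars K))

end Koszul

section Graded

variable (σ : Type) [Fintype σ] [LinearOrder σ]
variable {M : Type} [AddCommGroup M] [Module (MvPolynomial σ K) M]
variable [Module K M] [IsScalarTower K (MvPolynomial σ K) M]

/-- `ℳ` is a grading of the `S`-module `M` making it a graded `S`-module. -/
def IsGrading (ℳ : ℤ → Submodule K M) : Prop :=
  DirectSum.IsInternal ℳ ∧
    ∀ (c : ℕ) (p : MvPolynomial σ K), p ∈ MvPolynomial.homogeneousSubmodule σ K c →
      ∀ (j : ℤ), ∀ x ∈ ℳ j, p • x ∈ ℳ (j + c)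

/-- The sequence of all the variables of the polynomial ring. -/
noncomputable def xSeq (σ : Type) : σ → MvPolynomial σ K := fun v => MvPolynomial.X v

/-- The graded Betti number `β_{i,j}(M) = dim_K Tor_i^S(M,K)_j`, computed as the
dimension of the degree-`j` piece of the Koszul homology `H_i(x_1,…,x_n; M)`. -/
noncomputable def betti (ℳ : ℤ → Submodule K M) (i : ℕ) (j : ℤ) : ℕ :=
  kosHdim K (xSeq K σ) ℳ i j

/-- `β_{i,j}(M) = 0`, i.e. the degree-`j` piece of `H_i(x_1,…,x_n;M)` vanishes. -/
def bettiZero (ℳ : ℤ → Submodule K M) (i : ℕ) (j : ℤ) : Prop :=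
  kosPieceZero K (xSeq K σ) ℳ i j

/-- `reg M ≤ c` for the Castelnuovo–Mumford regularity:
`β_{i,i+j}(M) = 0` for all `i` and all `j > c`. -/
def regLE (ℳ : ℤ → Submodule K M) (c : ℤ) : Prop :=
  ∀ (i : ℕ) (j : ℤ), c < j → bettiZero K σ ℳ i ((i : ℤ) + j)

/-- The Castelnuovo–Mumford regularity
`reg M = max {j : β_{i,i+j}(M) ≠ 0 for some i}`. -/
noncomputable def regM (ℳ : ℤ → Submodule K M) : ℤ :=
  sSup {j : ℤ | ∃ i : ℕ, ¬ bettiZero K σ ℳ i ((i : ℤ) + j)}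

/-- The depth of `M` (with respect to the irrelevant maximal ideal), via the
Auslander–Buchsbaum formula: `depth M = n - max {i : H_i(x_1,…,x_n; M) ≠ 0}`. -/
noncomputable def depthKos : ℕ :=
  Fintype.card σ - sSup {i : ℕ | ¬ kosHomologyZero K (xSeq K σ) (M := M) i}

end Graded

/-- `S/I` is Cohen–Macaulay: its depth equals its Krull dimension. -/
def IsCMquot {σ : Type} [Fintype σ] [LinearOrder σ] (I : Ideal (MvPolynomial σ K)) : Prop :=
  ringKrullDim (MvPolynomial σ K ⧸ I) =
    ((depthKos K σ (M := MvPolynomial σ K ⧸ I) : ℕ∞) : WithBot ℕ∞)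

section Sequences

variable {σ : Type}
variable {M : Type} [AddCommGroup M] [Module (MvPolynomial σ K) M]
variable [Module K M] [IsScalarTower K (MvPolynomial σ K) M]

/-- The submodule `(y_1, …, y_k) M ⊆ M` (for the first `k` members of `y`). -/
noncomputable def stepSub {p : ℕ} (y : Fin p → MvPolynomial σ K) (k : ℕ) :
    Submodule (MvPolynomial σ K) M :=
  ⨆ (ℓ : Fin p) (_ : (ℓ : ℕ) < k), LinearMap.range (LinearMap.lsmul (MvPolynomial σ K) M (y ℓ))

/-- The quotient `M/(y_1,…,y_k)M`. -/
abbrev StepQuot {p : ℕ} (y : Fin p → MvPolynomial σ K) (k : ℕ) : Type :=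
  M ⧸ stepSub K (M := M) y k

/-- The degree-`j` piece of `M/(y_1,…,y_k)M` (image of the degree-`j` piece of `M`). -/
noncomputable def stepPiece {p : ℕ} (ℳ : ℤ → Submodule K M)
    (y : Fin p → MvPolynomial σ K) (k : ℕ) (j : ℤ) :
    Submodule K (StepQuot K (M := M) y k) :=
  Submodule.map ((stepSub K (M := M) y k).mkQ.restrictScalars K) (ℳ j)

/-- `A_k(y;M) = (0 :_{M/(y_1,…,y_k)M} y_{k+1})` (with `k = 0, 1, …, p-1`; here
`k : Fin p` and `y_{k+1}` is `y k` in 0-based indexing). -/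
noncomputable def aSub {p : ℕ} (y : Fin p → MvPolynomial σ K) (k : Fin p) :
    Submodule (MvPolynomial σ K) (StepQuot K (M := M) y k) :=
  LinearMap.ker (LinearMap.lsmul (MvPolynomial σ K) (StepQuot K (M := M) y k) (y k))

/-- The degree-`j` piece `A_k(y;M)_j` of `A_k(y;M)`. -/
noncomputable def aPiece {p : ℕ} (ℳ : ℤ → Submodule K M)
    (y : Fin p → MvPolynomial σ K) (k : Fin p) (j : ℤ) :
    Submodule K (StepQuot K (M := M) y k) :=
  (aSub K (M := M) y k).restrictScalars K ⊓ stepPiece K ℳ y k j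

/-- `y` is an almost regular sequence on `M`: every `A_k(y;M)` has finite length. -/
def IsAlmostRegular {p : ℕ} (y : Fin p → MvPolynomial σ K) : Prop :=
  ∀ k : Fin p, IsFiniteLength (MvPolynomial σ K) ↥(aSub K (M := M) y k)

end Sequences

/-- `Θ` is a linear system of parameters for `R = S/I` (where `d = dim R`):
`d` linear forms such that `R/ΘR` has Krull dimension `0`. -/
noncomputable def IsLSOP {σ : Type} (I : Ideal (MvPolynomial σ K)) (d : ℕ)
    (Θ : Fin d → MvPolynomial σ K) : Prop :=
  (∀ ℓ, Θ ℓ ∈ polyDeg K σ 1) ∧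
    ringKrullDim (MvPolynomial σ K ⧸ (I ⊔ Ideal.span (Set.range Θ))) = 0

/-- The Stanley–Reisner ideal of a collection `Γ` of subsets of the (finite) vertex
set `τ`: the ideal generated by the squarefree monomials `x_F = ∏_{u ∈ F} x_u` with
`F ∉ Γ`. -/
noncomputable def SRideal {τ : Type} (Γ : Set (Finset τ)) : Ideal (MvPolynomial τ K) :=
  Ideal.span {g | ∃ F : Finset τ, F ∉ Γ ∧ g = ∏ u ∈ F, MvPolynomial.X u}

/-- A monomial ideal. -/
def IsMonomialIdeal {σ : Type} (I : Ideal (MvPolynomial σ K)) : Prop :=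
  ∃ A : Set (σ →₀ ℕ), I = Ideal.span ((fun a => MvPolynomial.monomial a (1 : K)) '' A)

/-- The depth of a (Noetherian) local ring `A`:
`depth A = inf {i : Ext_A^i(A/m, A) ≠ 0}`. -/
noncomputable def depthLocal (A : Type) [CommRing A] [IsLocalRing A] : ℕ :=
  sInf {i : ℕ |
    Nontrivial (((Ext A (ModuleCat A) i).obj
      (Opposite.op (ModuleCat.of A (IsLocalRing.ResidueField A)))).obj (ModuleCat.of A A))}

/-- `R = S/I` satisfies Serre's condition `(S_r)`:
`depth R_P ≥ min (r, dim R_P)` for every homogeneous prime ideal `P ⊇ I`. -/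
def SerreQuot {σ : Type} (I : Ideal (MvPolynomial σ K)) (r : ℕ) : Prop :=
  ∀ P : Ideal (MvPolynomial σ K ⧸ I), ∀ hP : P.IsPrime,
    IsHomogIdeal K (P.comap (Ideal.Quotient.mk I)) →
      haveI := hP
      min (r : WithBot ℕ∞) (ringKrullDim (Localization.AtPrime P)) ≤
        (depthLocal (Localization.AtPrime P) : WithBot ℕ∞)

/-! Write `R_k = R/(θ_1,…,θ_k)R`. In each degree `j`, multiplication by the linear form
`θ_{k+1}` gives an exact sequence
`0 → A_k(Θ;R)_{j-1} → (R_k)_{j-1} → (R_k)_j → (R_{k+1})_j → 0`,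
so the Hilbert function of `R_{k+1}` is the backward difference of that of `R_k` plus
`j ↦ dim A_k(Θ;R)_{j-1}`. After `d` steps these correction terms vanish in degrees `≤ r` and
add up to `∑_k dim A_k(Θ;R)_r` in degree `r + 1`, while the `d`-fold backward difference of
the Hilbert function of `R` is its `h`-vector. Exactness in the middle,
`(R_k)_j ∩ θ_{k+1} R_k = θ_{k+1} (R_k)_{j-1}`, holds because `I + (θ_1,…,θ_k)` is a
homogeneous ideal. -/

open Finset Module MvPolynomial

variable {K}

def backDiff (g : ℤ → ℤ) (j : ℤ) : ℤ := g j - g (j - 1)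

theorem iterate_backDiff_apply (g : ℤ → ℤ) (k : ℕ) (j : ℤ) :
    backDiff^[k] g j = ∑ i ∈ range (k + 1), (-1) ^ i * (k.choose i : ℤ) * g (j - i) := by
  induction k generalizing j with
  | zero => simp
  | succ k ih =>
    have pascal : ∀ i ∈ range (k + 1),
        (-1) ^ (i + 1) * ((k + 1).choose (i + 1) : ℤ) * g (j - (i + 1 : ℕ)) =
          (-1) ^ (i + 1) * (k.choose (i + 1) : ℤ) * g (j - (i + 1 : ℕ))
            - (-1) ^ i * (k.choose i : ℤ) * g (j - 1 - i) := by
      intro i _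
      have hshift : j - ((i + 1 : ℕ) : ℤ) = j - 1 - i := by push_cast; ring
      rw [hshift, Nat.choose_succ_succ']
      push_cast
      ring
    rw [Function.iterate_succ_apply', backDiff, ih, ih,
      sum_range_succ' (fun i => (-1) ^ i * ((k + 1).choose i : ℤ) * g (j - i)), sum_congr rfl pascal,
      sum_sub_distrib, sum_range_succ' (fun i => (-1) ^ i * (k.choose i : ℤ) * g (j - i)),
      sum_range_succ (fun i => (-1) ^ (i + 1) * (k.choose (i + 1) : ℤ) * g (j - (i + 1 : ℕ))),
      Nat.choose_succ_self]
    simp only [Int.reduceNeg, Nat.cast_add, Nat.cast_one, pow_zero, Nat.choose_zero_right, mul_one,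
      CharP.cast_eq_zero, sub_zero, one_mul, mul_zero, zero_mul, add_zero]
    ring

theorem iterate_backDiff_natCast {g : ℤ → ℤ} (hg : ∀ j < 0, g j = 0) (k j : ℕ) :
    backDiff^[k] g j = ∑ i ∈ range (j + 1), (-1) ^ i * (k.choose i : ℤ) * g (j - i : ℕ) := by
  rw [iterate_backDiff_apply]
  calc _ = ∑ i ∈ range (k + j + 1), (-1) ^ i * (k.choose i : ℤ) * g (j - i) := by
        refine sum_subset (range_subset_range.mpr (by omega)) fun i _ hi => ?_
        rw [Nat.choose_eq_zero_of_lt (by simpa using hi)]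
        simp
    _ = _ := by
        refine (sum_subset (range_subset_range.mpr (by omega)) fun i _ hi => ?_).symm.trans
          (sum_congr rfl fun i hi => ?_)
        · rw [hg _ (by simp only [mem_range] at hi; omega), mul_zero]
        · rw [Nat.cast_sub (by simp only [mem_range] at hi; omega)]

theorem iterate_backDiff_of_succ_eq {r : ℤ} {d : ℕ} {f : ℕ → ℤ → ℤ} {e : Fin d → ℤ → ℤ}
    (hf : ∀ (k : Fin d) (j : ℤ), f (k + 1) j = backDiff (f k) j + e k (j - 1))
    (he : ∀ k j, j < r → e k j = 0) :
    (∀ j ≤ r, f d j = backDiff^[d] (f 0) j) ∧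
      f d (r + 1) = backDiff^[d] (f 0) (r + 1) + ∑ k, e k r := by
  induction d with
  | zero => simp
  | succ d ih =>
    obtain ⟨hlow, htop⟩ := ih (e := fun k => e k.castSucc) (fun k => hf k.castSucc)
      (fun k => he k.castSucc)
    have hlast := hf (Fin.last d)
    simp only [Fin.val_last] at hlast
    refine ⟨fun j hj => ?_, ?_⟩
    · rw [hlast, he _ _ (by omega), Function.iterate_succ_apply', backDiff, backDiff, hlow j hj,
        hlow (j - 1) (by omega), add_zero]
    · rw [hlast, Function.iterate_succ_apply', backDiff, backDiff, htop, add_sub_cancel_right,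
        hlow r le_rfl, Fin.sum_univ_castSucc]
      ring

theorem finrank_map_add_finrank_inf_ker {V W : Type*} [AddCommGroup V] [Module K V]
    [AddCommGroup W] [Module K W] (f : V →ₗ[K] W) (P : Submodule K V) [FiniteDimensional K P] :
    finrank K (P.map f) + finrank K ↥(P ⊓ LinearMap.ker f) = finrank K P := by
  rw [← LinearMap.range_domRestrict, ← (Submodule.comapSubtypeEquivOfLe
    (inf_le_left : P ⊓ LinearMap.ker f ≤ P)).finrank_eq, Submodule.comap_inf,
    Submodule.comap_subtype_self, top_inf_eq, ← LinearMap.ker_domRestrict]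
  exact LinearMap.finrank_range_add_finrank_ker _

attribute [local instance] MvPolynomial.gradedAlgebra

section GradedPieces

variable {σ : Type}

theorem polyDeg_natCast (c : ℕ) : polyDeg K σ c = homogeneousSubmodule σ K c := by
  simp [polyDeg]

theorem polyDeg_one : polyDeg K σ 1 = homogeneousSubmodule σ K 1 :=
  polyDeg_natCast 1

theorem polyDeg_of_neg {j : ℤ} (hj : j < 0) : polyDeg K σ j = ⊥ := by
  rw [polyDeg, if_neg (not_le.mpr hj)]

instance [Finite σ] (j : ℤ) : FiniteDimensional K (polyDeg K σ j) := by
  rcases lt_or_ge j 0 with hj | hj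
  · rw [polyDeg_of_neg hj]
    infer_instance
  · lift j to ℕ using hj
    rw [polyDeg_natCast]
    exact Submodule.finiteDimensional_of_le (S₂ := restrictTotalDegree σ K j) fun _ hp =>
      (mem_restrictTotalDegree ..).mpr ((mem_homogeneousSubmodule _ _).mp hp).totalDegree_le

theorem mul_mem_polyDeg {a b : ℤ} {θ p : MvPolynomial σ K} (hθ : θ ∈ polyDeg K σ a)
    (hp : p ∈ polyDeg K σ b) : θ * p ∈ polyDeg K σ (a + b) := by
  rcases lt_or_ge a 0 with ha | ha
  · rw [polyDeg_of_neg ha, Submodule.mem_bot] at hθ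
    simp [hθ]
  rcases lt_or_ge b 0 with hb | hb
  · rw [polyDeg_of_neg hb, Submodule.mem_bot] at hp
    simp [hp]
  lift a to ℕ using ha
  lift b to ℕ using hb
  rw [polyDeg_natCast, mem_homogeneousSubmodule] at hθ hp
  rw [← Nat.cast_add, polyDeg_natCast, mem_homogeneousSubmodule]
  exact hθ.mul hp

theorem coe_decompose_homogeneousSubmodule (p : MvPolynomial σ K) (c : ℕ) :
    (DirectSum.decompose (homogeneousSubmodule σ K) p c : MvPolynomial σ K) =
      homogeneousComponent c p :=
  decomposition.decompose'_apply p c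

theorem exists_homogeneousComponent_mul_eq {m : ℕ} {θ : MvPolynomial σ K}
    (hθ : θ ∈ homogeneousSubmodule σ K m) (q : MvPolynomial σ K) (c : ℕ) :
    ∃ q' ∈ polyDeg K σ (c - m), homogeneousComponent c (θ * q) = θ * q' := by
  rw [← coe_decompose_homogeneousSubmodule]
  by_cases h : m ≤ c
  · refine ⟨homogeneousComponent (c - m) q, ?_, ?_⟩
    · rw [← Nat.cast_sub h, polyDeg_natCast]
      exact homogeneousComponent_mem _ _
    · rw [DirectSum.coe_decompose_mul_of_left_mem_of_le _ hθ h, coe_decompose_homogeneousSubmodule]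
  · exact ⟨0, zero_mem _, by
      rw [DirectSum.coe_decompose_mul_of_left_mem_of_not_le _ hθ h, mul_zero]⟩

theorem isHomogeneous_of_isHomogIdeal {I : Ideal (MvPolynomial σ K)} (hI : IsHomogIdeal K I) :
    I.IsHomogeneous (homogeneousSubmodule σ K) := fun c p hp => by
  rw [coe_decompose_homogeneousSubmodule]
  exact hI p hp c

end GradedPieces

section StepQuotients

variable {σ : Type} {M N : Type} [AddCommGroup M] [Module (MvPolynomial σ K) M]
  [AddCommGroup N] [Module (MvPolynomial σ K) N] {p : ℕ} (y : Fin p → MvPolynomial σ K)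

theorem stepSub_zero : stepSub K (M := M) y 0 = ⊥ := by
  simp [stepSub]

theorem stepSub_succ (k : Fin p) : stepSub K (M := M) y (k + 1) =
    stepSub K y k ⊔ LinearMap.range (LinearMap.lsmul (MvPolynomial σ K) M (y k)) := by
  have hlt : ∀ ℓ : Fin p, ((ℓ : ℕ) < k + 1) = ((ℓ : ℕ) < k ∨ ℓ = k) := fun ℓ => by
    rw [eq_iff_iff, Nat.lt_succ_iff_lt_or_eq, Fin.val_inj]
  simp only [stepSub, hlt, iSup_or, iSup_sup_eq, iSup_iSup_eq_left]

theorem map_range_lsmul {f : M →ₗ[MvPolynomial σ K] N} (hf : Function.Surjective f)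
    (a : MvPolynomial σ K) :
    (LinearMap.range (LinearMap.lsmul _ M a)).map f = LinearMap.range (LinearMap.lsmul _ N a) := by
  have hcomm : f ∘ₗ LinearMap.lsmul _ M a = LinearMap.lsmul _ N a ∘ₗ f :=
    LinearMap.ext fun x => map_smul f a x
  rw [← LinearMap.range_comp, hcomm, LinearMap.range_comp, LinearMap.range_eq_top.mpr hf,
    ← LinearMap.range_eq_map]

theorem map_stepSub {f : M →ₗ[MvPolynomial σ K] N} (hf : Function.Surjective f) (k : ℕ) :
    (stepSub K (M := M) y k).map f = stepSub K (M := N) y k := by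
  simp only [stepSub, Submodule.map_iSup, map_range_lsmul hf]

theorem range_lsmul_eq_span (a : MvPolynomial σ K) :
    LinearMap.range (LinearMap.lsmul _ (MvPolynomial σ K) a) = Ideal.span {a} := by
  ext x
  simp only [LinearMap.mem_range, LinearMap.lsmul_apply, smul_eq_mul, Ideal.mem_span_singleton',
    mul_comm]

theorem stepSub_isHomogeneous
    (hy : ∀ ℓ, SetLike.IsHomogeneousElem (homogeneousSubmodule σ K) (y ℓ)) (k : ℕ) :
    Ideal.IsHomogeneous (homogeneousSubmodule σ K) (stepSub K (M := MvPolynomial σ K) y k) :=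
  Ideal.IsHomogeneous.iSup₂ fun ℓ _ => by
    rw [range_lsmul_eq_span]
    exact Ideal.homogeneous_span _ _ fun x hx => (Set.mem_singleton_iff.mp hx) ▸ hy ℓ

end StepQuotients

section QuotientPieces

variable {σ : Type} (I : Ideal (MvPolynomial σ K)) {p : ℕ} (y : Fin p → MvPolynomial σ K)

noncomputable def stepMk (k : ℕ) :
    MvPolynomial σ K →ₗ[MvPolynomial σ K] StepQuot K (M := MvPolynomial σ K ⧸ I) y k :=
  (stepSub K y k).mkQ ∘ₗ I.mkQ

theorem stepMk_surjective (k : ℕ) : Function.Surjective (stepMk I y k) :=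
  (Submodule.mkQ_surjective _).comp (Submodule.mkQ_surjective _)

theorem ker_stepMk (k : ℕ) :
    LinearMap.ker (stepMk I y k) = stepSub K (M := MvPolynomial σ K) y k ⊔ I := by
  rw [stepMk, LinearMap.ker_comp, Submodule.ker_mkQ, ← map_stepSub y (Submodule.mkQ_surjective I),
    Submodule.comap_map_eq, Submodule.ker_mkQ]

theorem stepPiece_eq_map (k : ℕ) (j : ℤ) :
    stepPiece K (fun j => quotDeg K I j) y k j =
      (polyDeg K σ j).map ((stepMk I y k).restrictScalars K) := by
  rw [stepPiece, quotDeg, ← Submodule.map_comp]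
  rfl

instance [Finite σ] (j : ℤ) : FiniteDimensional K (quotDeg K I j) :=
  Module.Finite.map _ _

instance [Finite σ] (k : ℕ) (j : ℤ) :
    FiniteDimensional K (stepPiece K (fun j => quotDeg K I j) y k j) :=
  Module.Finite.map _ _

variable {I y}

theorem quotDeg_of_neg {j : ℤ} (hj : j < 0) : quotDeg K I j = ⊥ := by
  rw [quotDeg, polyDeg_of_neg hj, Submodule.map_bot]

theorem finrank_stepPiece_zero [Finite σ] (j : ℤ) :
    finrank K (stepPiece K (fun j => quotDeg K I j) y 0 j) = finrank K (quotDeg K I j) := by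
  have h := finrank_map_add_finrank_inf_ker ((stepSub K y 0).mkQ.restrictScalars K) (quotDeg K I j)
  rw [LinearMap.ker_restrictScalars, Submodule.ker_mkQ,
    show quotDeg K I j ⊓ (stepSub K y 0).restrictScalars K = ⊥ by
      rw [stepSub_zero, Submodule.restrictScalars_bot, inf_bot_eq], finrank_bot, add_zero] at h
  exact h

theorem hQ_eq_iterate_backDiff (d j : ℕ) :
    hQ K I d j = backDiff^[d] (fun i => (finrank K (quotDeg K I i) : ℤ)) j := by
  rw [iterate_backDiff_natCast fun i hi => by rw [quotDeg_of_neg hi, finrank_bot,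
    Nat.cast_zero], hQ]
  rfl

theorem map_lsmul_stepPiece_le {k : ℕ} {a : MvPolynomial σ K} (ha : a ∈ polyDeg K σ 1) (j : ℤ) :
    (stepPiece K (fun j => quotDeg K I j) y k (j - 1)).map
        ((LinearMap.lsmul (MvPolynomial σ K) (StepQuot K y k) a).restrictScalars K) ≤
      stepPiece K (fun j => quotDeg K I j) y k j := by
  rw [stepPiece_eq_map, stepPiece_eq_map]
  rintro _ ⟨_, ⟨q, hq, rfl⟩, rfl⟩
  refine ⟨a * q, by simpa using mul_mem_polyDeg ha hq, ?_⟩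
  simp [← smul_eq_mul]

theorem stepPiece_inf_range_lsmul (hI : IsHomogIdeal K I) (hy : ∀ ℓ, y ℓ ∈ polyDeg K σ 1)
    (k : Fin p) (j : ℤ) :
    stepPiece K (fun j => quotDeg K I j) y k j ⊓
        (LinearMap.range (LinearMap.lsmul (MvPolynomial σ K) (StepQuot K y k) (y k))).restrictScalars K =
      (stepPiece K (fun j => quotDeg K I j) y k (j - 1)).map
        ((LinearMap.lsmul (MvPolynomial σ K) (StepQuot K y k) (y k)).restrictScalars K) := by
  refine le_antisymm ?_ (le_inf (map_lsmul_stepPiece_le (hy k) j) (LinearMap.map_le_range ..))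
  rintro x ⟨hx, z, hz⟩
  rw [stepPiece_eq_map] at hx ⊢
  obtain ⟨P, hP, rfl⟩ := hx
  obtain ⟨q, rfl⟩ := stepMk_surjective I y k z
  have hJ : P - y k * q ∈ stepSub K (M := MvPolynomial σ K) y k ⊔ I := by
    rw [← ker_stepMk, LinearMap.mem_ker, map_sub, ← smul_eq_mul, map_smul]
    exact sub_eq_zero.mpr hz.symm
  rcases lt_or_ge j 0 with hj | hj
  · obtain rfl : P = 0 := by simpa [polyDeg_of_neg hj] using hP
    exact ⟨0, zero_mem _, by simp⟩
  lift j to ℕ using hj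
  rw [polyDeg_natCast] at hP
  -- `P` is homogeneous of degree `j`, so only the degree-`(j - 1)` part of `q` matters.
  obtain ⟨q', hq', hcomp⟩ :=
    exists_homogeneousComponent_mul_eq (m := 1) (polyDeg_one (K := K) ▸ hy k) q j
  have hJ' := homogeneousComponent_mem_of_mem
    ((stepSub_isHomogeneous y (fun ℓ => ⟨1, polyDeg_one (K := K) ▸ hy ℓ⟩) k).sup
      (isHomogeneous_of_isHomogIdeal hI)) hJ j
  rw [map_sub, hcomp, homogeneousComponent_eq_self hP, ← ker_stepMk, LinearMap.mem_ker, map_sub,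
    sub_eq_zero] at hJ'
  refine ⟨stepMk I y k q', ⟨q', by simpa using hq', rfl⟩, ?_⟩
  simp [hJ', ← smul_eq_mul]

theorem finrank_stepPiece_succ_add [Finite σ] (hI : IsHomogIdeal K I)
    (hy : ∀ ℓ, y ℓ ∈ polyDeg K σ 1) (k : Fin p) (j : ℤ) :
    finrank K (stepPiece K (fun j => quotDeg K I j) y (k + 1) j) +
        finrank K (stepPiece K (fun j => quotDeg K I j) y k (j - 1)) =
      finrank K (stepPiece K (fun j => quotDeg K I j) y k j) +
        finrank K (aPiece K (fun j => quotDeg K I j) y k (j - 1)) := by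
  set θ := (LinearMap.lsmul (MvPolynomial σ K) (StepQuot K (M := MvPolynomial σ K ⧸ I) y k)
    (y k)).restrictScalars K
  set π : StepQuot K (M := MvPolynomial σ K ⧸ I) y k →ₗ[K] StepQuot K y (k + 1) :=
    (Submodule.mapQ (stepSub K (M := MvPolynomial σ K ⧸ I) y k) (stepSub K y (k + 1)) LinearMap.id
    (by rw [Submodule.comap_id, stepSub_succ]; exact le_sup_left)).restrictScalars K
  have hπ : (stepPiece K (fun j => quotDeg K I j) y k j).map π =
      stepPiece K (fun j => quotDeg K I j) y (k + 1) j := by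
    rw [stepPiece_eq_map, stepPiece_eq_map, ← Submodule.map_comp]
    rfl
  have hker : stepPiece K (fun j => quotDeg K I j) y k j ⊓ LinearMap.ker π =
      (stepPiece K (fun j => quotDeg K I j) y k (j - 1)).map θ := by
    rw [LinearMap.ker_restrictScalars, Submodule.ker_mapQ, Submodule.comap_id, stepSub_succ,
      Submodule.map_sup, Submodule.mkQ_map_self, bot_sup_eq,
      map_range_lsmul (Submodule.mkQ_surjective _)]
    exact stepPiece_inf_range_lsmul hI hy k j
  have hA : stepPiece K (fun j => quotDeg K I j) y k (j - 1) ⊓ LinearMap.ker θ =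
      aPiece K (fun j => quotDeg K I j) y k (j - 1) := by
    rw [LinearMap.ker_restrictScalars, aPiece, aSub, inf_comm]
  have h1 := finrank_map_add_finrank_inf_ker π (stepPiece K (fun j => quotDeg K I j) y k j)
  have h2 := finrank_map_add_finrank_inf_ker θ (stepPiece K (fun j => quotDeg K I j) y k (j - 1))
  rw [hπ, hker] at h1
  rw [hA] at h2
  omega

end QuotientPieces

theorem hQ_eq_of_lsop_general {n : ℕ} (K : Type) [Field K] (r : ℕ)
    (I : Ideal (MvPolynomial (Fin n) K)) (hI : IsHomogIdeal K I)
    (d : ℕ)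
    (Θ : Fin d → MvPolynomial (Fin n) K) (hΘ : IsLSOP K I d Θ)
    (hA : ∀ (k : Fin d) (j : ℤ), j ≤ (r : ℤ) - 1 →
      aPiece K (M := MvPolynomial (Fin n) K ⧸ I) (fun j' => quotDeg K I j') Θ k j = ⊥) :
    (∀ j : ℕ, j ≤ r →
      hQ K I d j =
        (Module.finrank K
          (stepPiece K (M := MvPolynomial (Fin n) K ⧸ I)
            (fun j' => quotDeg K I j') Θ d (j : ℤ)) : ℤ)) ∧
    hQ K I d (r + 1) =
      (Module.finrank K
        (stepPiece K (M := MvPolynomial (Fin n) K ⧸ I)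
          (fun j' => quotDeg K I j') Θ d ((r : ℤ) + 1)) : ℤ) -
      ∑ k : Fin d,
        (Module.finrank K
          (aPiece K (M := MvPolynomial (Fin n) K ⧸ I)
            (fun j' => quotDeg K I j') Θ k (r : ℤ)) : ℤ) := by
  set f : ℕ → ℤ → ℤ := fun k j => finrank K (stepPiece K (fun j' => quotDeg K I j') Θ k j)
  set e : Fin d → ℤ → ℤ := fun k j => finrank K (aPiece K (fun j' => quotDeg K I j') Θ k j)
  have hrec : ∀ (k : Fin d) j, f (k + 1) j = backDiff (f k) j + e k (j - 1) := fun k j => by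
    have := finrank_stepPiece_succ_add hI hΘ.1 k j
    simp only [f, e, backDiff]
    omega
  have he : ∀ k j, j < (r : ℤ) → e k j = 0 := fun k j hj => by
    simp only [e]
    rw [hA k j (by omega), finrank_bot, Nat.cast_zero]
  have hf0 : (fun j => (finrank K (quotDeg K I j) : ℤ)) = f 0 :=
    funext fun j => congrArg _ (finrank_stepPiece_zero j).symm
  obtain ⟨hlow, htop⟩ := iterate_backDiff_of_succ_eq hrec he
  refine ⟨fun j hj => by rw [hQ_eq_iterate_backDiff, hf0, ← hlow j (by omega)], ?_⟩
  rw [hQ_eq_iterate_backDiff, hf0, Nat.cast_add, Nat.cast_one, eq_sub_iff_add_eq]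
  exact htop.symm

/-- **Lemma 2.1.**  Let `I ⊂ S` be a homogeneous ideal, `R = S/I` of Krull dimension
`d`, and `Θ = θ_1, …, θ_d` a linear system of parameters of `R`.  If
`dim_K A_k(Θ;R)_j = 0` for all `k = 0, …, d-1` and all `j ≤ r-1`, then
(i) `h_j(R) = dim_K (R/ΘR)_j` for all `j ≤ r`, and
(ii) `h_{r+1}(R) = dim_K (R/ΘR)_{r+1} - ∑_{k=0}^{d-1} dim_K A_k(Θ;R)_r`. -/
theorem hQ_eq_of_lsop {n : ℕ} (K : Type) [Field K] [Infinite K] (r : ℕ)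
    (I : Ideal (MvPolynomial (Fin n) K)) (hI : IsHomogIdeal K I)
    (d : ℕ) (hd : ringKrullDim (MvPolynomial (Fin n) K ⧸ I) = (d : WithBot ℕ∞))
    (Θ : Fin d → MvPolynomial (Fin n) K) (hΘ : IsLSOP K I d Θ)
    (hA : ∀ (k : Fin d) (j : ℤ), j ≤ (r : ℤ) - 1 →
      aPiece K (M := MvPolynomial (Fin n) K ⧸ I) (fun j' => quotDeg K I j') Θ k j = ⊥) :
    (∀ j : ℕ, j ≤ r →
      hQ K I d j =
        (Module.finrank K
          (stepPiece K (M := MvPolynomial (Fin n) K ⧸ I)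
            (fun j' => quotDeg K I j') Θ d (j : ℤ)) : ℤ)) ∧
    hQ K I d (r + 1) =
      (Module.finrank K
        (stepPiece K (M := MvPolynomial (Fin n) K ⧸ I)
          (fun j' => quotDeg K I j') Θ d ((r : ℤ) + 1)) : ℤ) -
      ∑ k : Fin d,
        (Module.finrank K
          (aPiece K (M := MvPolynomial (Fin n) K ⧸ I)
            (fun j' => quotDeg K I j') Θ k (r : ℤ)) : ℤ) :=
  hQ_eq_of_lsop_general K r I hI d Θ hΘ hA

end SerrePaper
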